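/- arXiv:2312.00350 — 3 statements merged into one kernel-verified Lean document; each statement's English description precedes it below -/
import Mathlib

section
/- For u > arccosh(3/2), the function u ↦ u − φ(u), where φ(u) = arccosh(cosh u − 1/2), is strictly monotonically decreasing and tends to 0 as u → ∞. -/
noncomputable def arcosh (x : ℝ) : ℝ := Real.log (x + Real.sqrt (x ^ 2 - 1))

noncomputable def kappa : ℝ := arcosh (3 / 2)

noncomputable def phi (u : ℝ) : ℝ := arcosh (Real.cosh u - 1 / 2)

/-!
Since `u = arcosh (cosh u)` for `u ≥ 0`, we have `u - φ u = D (cosh u)` with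
`D x = arcosh x - arcosh (x - 1/2)`. The derivative `(x² - 1)^(-1/2)` of `arcosh` is strictly
decreasing, so `D` is strictly decreasing on `x > 3/2`, and by the mean value theorem
`0 ≤ D x ≤ ½ ((x - ½)² - 1)^(-1/2) → 0`. Composing with `cosh`, which is increasing on `u > κ`
and tends to infinity, gives both claims.
-/

open Set Filter Topology

namespace Real

lemma tendsto_cosh_atTop : Tendsto cosh atTop atTop :=
  tendsto_atTop_mono (fun x => by rw [cosh_eq]; linarith [exp_pos (-x)])
    (tendsto_exp_atTop.atTop_div_const two_pos)

lemma strictAntiOn_inv_sqrt_sq_sub_one : StrictAntiOn (fun x => (√(x ^ 2 - 1))⁻¹) (Ioi 1) := by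
  intro a ha b _ hab
  have ha' : 0 < a ^ 2 - 1 := by nlinarith [mem_Ioi.1 ha]
  exact inv_strictAntiOn (sqrt_pos.2 ha') (sqrt_pos.2 (by nlinarith [mem_Ioi.1 ha]))
    (sqrt_lt_sqrt ha'.le (by nlinarith [mem_Ioi.1 ha]))

variable {h : ℝ}

lemma strictAntiOn_arcosh_sub_arcosh_sub (hh : 0 < h) :
    StrictAntiOn (fun x => arcosh x - arcosh (x - h)) (Ioi (1 + h)) := by
  have hsub : ∀ x ∈ Ioi (1 + h), x - h ∈ Ioi 1 := fun x hx => by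
    simp only [mem_Ioi] at hx ⊢; linarith
  have hx1 : ∀ x ∈ Ioi (1 + h), x ∈ Ioi 1 := fun x hx => by
    simp only [mem_Ioi] at hx ⊢; linarith
  have hderiv : ∀ x ∈ Ioi (1 + h), HasDerivAt (fun x => arcosh x - arcosh (x - h))
      ((√(x ^ 2 - 1))⁻¹ - (√((x - h) ^ 2 - 1))⁻¹) x := fun x hx =>
    (hasDerivAt_arcosh (hx1 x hx)).sub ((hasDerivAt_arcosh (hsub x hx)).comp_sub_const x h)
  refine strictAntiOn_of_deriv_neg (convex_Ioi _)
    (fun x hx => (hderiv x hx).continuousAt.continuousWithinAt) ?_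
  rw [interior_Ioi]
  exact fun x hx => (hderiv x hx).deriv ▸ sub_neg.2 <|
    strictAntiOn_inv_sqrt_sq_sub_one (hsub x hx) (hx1 x hx) (by linarith)

lemma arcosh_sub_arcosh_sub_le (hh : 0 < h) {x : ℝ} (hx : 1 + h < x) :
    arcosh x - arcosh (x - h) ≤ h * (√((x - h) ^ 2 - 1))⁻¹ := by
  obtain ⟨c, hc, hslope⟩ := exists_hasDerivAt_eq_slope arcosh (fun x => (√(x ^ 2 - 1))⁻¹)
    (sub_lt_self x hh) (continuousOn_arcosh.mono fun y hy => by
      simp only [mem_Icc, mem_Ici] at hy ⊢; linarith)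
    (fun y hy => hasDerivAt_arcosh (by simp only [mem_Ioo, mem_Ioi] at hy ⊢; linarith))
  have hle : (√(c ^ 2 - 1))⁻¹ ≤ (√((x - h) ^ 2 - 1))⁻¹ :=
    (strictAntiOn_inv_sqrt_sq_sub_one (by simp only [mem_Ioi]; linarith)
      (by simp only [mem_Ioi]; linarith [hc.1]) hc.1).le
  rw [sub_sub_cancel] at hslope
  rw [hslope] at hle
  rwa [div_le_iff₀' hh] at hle

lemma tendsto_arcosh_sub_arcosh_sub_atTop (hh : 0 < h) :
    Tendsto (fun x => arcosh x - arcosh (x - h)) atTop (𝓝 0) := by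
  have hbound : Tendsto (fun x => h * (√((x - h) ^ 2 - 1))⁻¹) atTop (𝓝 0) := by
    have hsq : Tendsto (fun x => (x - h) ^ 2 - 1) atTop atTop := by
      simpa [sub_eq_add_neg] using tendsto_atTop_add_const_right _ (-1) <|
        (tendsto_pow_atTop two_ne_zero).comp (tendsto_atTop_add_const_right _ (-h) tendsto_id)
    simpa using ((tendsto_sqrt_atTop.comp hsq).inv_tendsto_atTop.const_mul h)
  refine tendsto_of_tendsto_of_tendsto_of_le_of_le' tendsto_const_nhds hbound ?_ ?_
  · filter_upwards [eventually_gt_atTop (1 + h)] with x hx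
    exact sub_nonneg.2 ((arcosh_le_arcosh (by linarith) (by linarith)).2 (by linarith))
  · filter_upwards [eventually_gt_atTop (1 + h)] with x hx
    exact arcosh_sub_arcosh_sub_le hh hx

end Real

lemma arcosh_eq_real_arcosh : arcosh = Real.arcosh := rfl

lemma cosh_kappa : Real.cosh kappa = 3 / 2 := Real.cosh_arcosh (by norm_num)

lemma kappa_pos : 0 < kappa := Real.arcosh_pos (by norm_num)

lemma sub_phi_eq {u : ℝ} (hu : 0 ≤ u) :
    u - phi u = Real.arcosh (Real.cosh u) - Real.arcosh (Real.cosh u - 1 / 2) := by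
  rw [phi, arcosh_eq_real_arcosh, Real.arcosh_cosh hu]

lemma mapsTo_cosh_Ioi_kappa : MapsTo Real.cosh (Ioi kappa) (Ioi (1 + 1 / 2)) := fun u hu => by
  rw [mem_Ioi, show (1 + 1 / 2 : ℝ) = Real.cosh kappa by rw [cosh_kappa]; norm_num,
    Real.cosh_lt_cosh, abs_of_pos kappa_pos, abs_of_pos (kappa_pos.trans hu)]
  exact hu

theorem u_sub_phi_strictAnti_tendsto_zero :
    StrictAntiOn (fun u => u - phi u) (Set.Ioi kappa) ∧
      Filter.Tendsto (fun u => u - phi u) Filter.atTop (nhds 0) := by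
  have heq : EqOn ((fun x => Real.arcosh x - Real.arcosh (x - 1 / 2)) ∘ Real.cosh)
      (fun u => u - phi u) (Ioi kappa) := fun u hu =>
    (sub_phi_eq (kappa_pos.trans hu).le).symm
  constructor
  · exact ((Real.strictAntiOn_arcosh_sub_arcosh_sub one_half_pos).comp_strictMonoOn
      (Real.cosh_strictMonoOn.mono fun u hu => kappa_pos.le.trans (le_of_lt hu))
      mapsTo_cosh_Ioi_kappa).congr heq
  · exact ((Real.tendsto_arcosh_sub_arcosh_sub_atTop one_half_pos).comp
      Real.tendsto_cosh_atTop).congr' (eventually_of_mem (Ioi_mem_atTop kappa) heq)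
end

section
/- For u > arccosh(3/2), the function u ↦ φ(u)/u, where φ(u) = arccosh(cosh u − 1/2), is strictly monotonically increasing. -/
open Real Set

/- The `arcosh` above unfolds to Mathlib's `Real.arcosh`, whose API is used throughout. -/

theorem strictMonoOn_div_self_of_hasDerivAt {f f' : ℝ → ℝ} {a : ℝ} (ha : 0 ≤ a)
    (hf : ∀ x ∈ Ioi a, HasDerivAt f (f' x) x) (hlt : ∀ x ∈ Ioi a, f x < x * f' x) :
    StrictMonoOn (fun x => f x / x) (Ioi a) := by
  have hquot : ∀ x ∈ Ioi a, HasDerivAt (fun x => f x / x) ((f' x * x - f x * 1) / x ^ 2) x :=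
    fun x hx => (hf x hx).div (hasDerivAt_id x) (ha.trans_lt hx).ne'
  refine strictMonoOn_of_deriv_pos (convex_Ioi a)
    (fun x hx => (hquot x hx).continuousAt.continuousWithinAt) fun x hx => ?_
  rw [interior_Ioi] at hx
  rw [(hquot x hx).deriv]
  have hx' := hlt x hx
  exact div_pos (by linarith) (pow_pos (ha.trans_lt hx) 2)

theorem kappa_nonneg : 0 ≤ kappa :=
  arcosh_nonneg (x := 3 / 2) (by norm_num)

theorem three_halves_lt_cosh {u : ℝ} (hu : kappa < u) : 3 / 2 < cosh u := by
  have hcosh : cosh kappa = 3 / 2 := cosh_arcosh (x := 3 / 2) (by norm_num)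
  rw [← hcosh, cosh_lt_cosh, abs_of_nonneg kappa_nonneg, abs_of_nonneg (kappa_nonneg.trans hu.le)]
  exact hu

theorem phi_lt_self {u : ℝ} (hu : 0 ≤ u) : phi u < u := by
  have hpos : 0 < cosh u - 1 / 2 := by linarith [one_le_cosh u]
  calc phi u = Real.arcosh (cosh u - 1 / 2) := rfl
    _ < Real.arcosh (cosh u) := (arcosh_lt_arcosh hpos (cosh_pos u)).2 (by linarith)
    _ = u := arcosh_cosh hu

theorem phi_pos {u : ℝ} (hu : 3 / 2 < cosh u) : 0 < phi u :=
  Real.arcosh_pos (by linarith)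

theorem hasDerivAt_phi {u : ℝ} (hu : 3 / 2 < cosh u) :
    HasDerivAt phi (sinh u / sinh (phi u)) u := by
  have harcosh := Real.hasDerivAt_arcosh (x := cosh u - 1 / 2) (by simp only [mem_Ioi]; linarith)
  have hsinh : sinh (phi u) = √((cosh u - 1 / 2) ^ 2 - 1) := sinh_arcosh (by linarith)
  rw [hsinh, div_eq_inv_mul]
  exact harcosh.comp u ((hasDerivAt_cosh u).sub_const _)

theorem phi_div_u_strictMono : StrictMonoOn (fun u => phi u / u) (Set.Ioi kappa) := by
  refine strictMonoOn_div_self_of_hasDerivAt kappa_nonneg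
    (fun u hu => hasDerivAt_phi (three_halves_lt_cosh hu)) fun u hu => ?_
  have hu0 : 0 < u := kappa_nonneg.trans_lt hu
  have hsinh : 0 < sinh (phi u) := sinh_pos_iff.2 (phi_pos (three_halves_lt_cosh hu))
  have hφ : phi u < u := phi_lt_self hu0.le
  calc phi u < u := hφ
    _ < u * (sinh u / sinh (phi u)) :=
      lt_mul_of_one_lt_right hu0 ((one_lt_div hsinh).2 (sinh_lt_sinh.2 hφ))
end

section
/- Let U > 3/2, |T| ≤ 1, and 1 ≤ S < U − 1/2 be real numbers. Then (U − ST)² + (S² − 1)(1 − T²) > 1/4. -/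
/-! As a function of `T` the expression is a convex quadratic with vertex at `T = U * S ≥ 1`,
so on `T ≤ 1` it is smallest at `T = 1`, where it equals `(U - S) ^ 2 > 1 / 4`. -/

theorem sq_sub_mul_add_mul_eq (U S T : ℝ) :
    (U - S * T) ^ 2 + (S ^ 2 - 1) * (1 - T ^ 2) =
      (U - S) ^ 2 + (1 - T) * (2 * U * S - 1 - T) := by
  ring

theorem sq_sub_le_of_le_one {U S T : ℝ} (hT : T ≤ 1) (hUS : 1 ≤ U * S) :
    (U - S) ^ 2 ≤ (U - S * T) ^ 2 + (S ^ 2 - 1) * (1 - T ^ 2) := by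
  rw [sq_sub_mul_add_mul_eq]
  have : 0 ≤ (1 - T) * (2 * U * S - 1 - T) := mul_nonneg (by linarith) (by linarith)
  linarith

theorem key_estimate_general (U T S : ℝ) (hT : |T| ≤ 1)
    (hS1 : 1 ≤ S) (hS2 : S < U - 1 / 2) :
    1 / 4 < (U - S * T) ^ 2 + (S ^ 2 - 1) * (1 - T ^ 2) := by
  have hU : 1 ≤ U := by linarith
  have hUS : 1 ≤ U * S := one_le_mul_of_one_le_of_one_le hU hS1
  have hUS_sq : (1 / 2) ^ 2 < (U - S) ^ 2 :=
    pow_lt_pow_left₀ (by linarith) (by norm_num) two_ne_zero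
  calc 1 / 4 = (1 / 2 : ℝ) ^ 2 := by norm_num
    _ < (U - S) ^ 2 := hUS_sq
    _ ≤ _ := sq_sub_le_of_le_one (abs_le.mp hT).2 hUS

theorem key_estimate (U T S : ℝ) (hU : 3 / 2 < U) (hT : |T| ≤ 1)
    (hS1 : 1 ≤ S) (hS2 : S < U - 1 / 2) :
    1 / 4 < (U - S * T) ^ 2 + (S ^ 2 - 1) * (1 - T ^ 2) :=
  key_estimate_general U T S hT hS1 hS2
end
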